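/- arXiv:2408.02570 — 3 statements merged into one kernel-verified Lean document; each statement's English description precedes it below -/
import Mathlib

section
/- The Bellman operator T of the decoupled single-source subproblem preserves monotonicity in the age coordinate: if J : S → ℝ satisfies J(E,K) ≤ J(E,K') for every energy level E ∈ {0,…,B} and all ages K ≤ K' in {1,…,Kmax}, then T J satisfies the same property. -/
open Finset Filter Topology

/-- Energy level after one unit of energy arrival, clamped at buffer size `B`. -/
def clampAdd {B : ℕ} (e : Fin (B+1)) : Fin (B+1) :=
  ⟨min (e.val + 1) B, by omega⟩

/-- Energy level after spending `Es` units of energy. -/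
def subE {B : ℕ} (Es : ℕ) (e : Fin (B+1)) : Fin (B+1) :=
  ⟨e.val - Es, by have := e.isLt; omega⟩

/-- Age update `K⁺ = min (K+1) Kmax`; ages in `{1,…,Kmax}` are represented by
`Fin Kmax`, where index `k` stands for age `k+1`. -/
def succAge {Kmax : ℕ} (k : Fin Kmax) : Fin Kmax :=
  ⟨min (k.val + 1) (Kmax - 1), by have := k.isLt; omega⟩

/-- The state of age `1` (index `0`). -/
def ageOne {Kmax : ℕ} (k : Fin Kmax) : Fin Kmax := ⟨0, k.pos⟩

/-- The real-valued age of a state with age index `k`. -/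
def ageVal {Kmax : ℕ} (k : Fin Kmax) : ℝ := (k.val : ℝ) + 1

/-- `G_J(E,K) = λ·J(min(E+1,B),K) + (1−λ)·J(E,K)`. -/
noncomputable def GVal {B Kmax : ℕ} (lam : ℝ) (J : Fin (B+1) × Fin Kmax → ℝ)
    (e : Fin (B+1)) (k : Fin Kmax) : ℝ :=
  lam * J (clampAdd e, k) + (1 - lam) * J (e, k)

/-- The not-sampling value `u_J(E,K) = K + α·G_J(E,K⁺)`. -/
noncomputable def uVal {B Kmax : ℕ} (lam alpha : ℝ) (J : Fin (B+1) × Fin Kmax → ℝ)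
    (e : Fin (B+1)) (k : Fin Kmax) : ℝ :=
  ageVal k + alpha * GVal lam J e (succAge k)

/-- The expected sampling cost
`σ_J(p) = K·(1−p) + α·p·G_J(E−Es,1) + α·(1−p)·G_J(E−Es,K⁺)`. -/
noncomputable def sigVal {B Kmax : ℕ} (Es : ℕ) (lam alpha : ℝ)
    (J : Fin (B+1) × Fin Kmax → ℝ) (e : Fin (B+1)) (k : Fin Kmax) (p : ℝ) : ℝ :=
  ageVal k * (1 - p) + alpha * p * GVal lam J (subE Es e) (ageOne k)
    + alpha * (1 - p) * GVal lam J (subE Es e) (succAge k)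

/-- The post-probing value `W_J(E,K,p) = min { u_J(E,K), σ_J(p) }`. -/
noncomputable def WVal {B Kmax : ℕ} (Es : ℕ) (lam alpha : ℝ)
    (J : Fin (B+1) × Fin Kmax → ℝ) (e : Fin (B+1)) (k : Fin Kmax) (p : ℝ) : ℝ :=
  min (uVal lam alpha J e k) (sigVal Es lam alpha J e k p)

/-- The probing value `v_J(E,K) = μ̂ + Σ_j q_j · W_J(E,K,p_j)`. -/
noncomputable def vVal {B Kmax : ℕ} (Es m : ℕ) (lam alpha mu : ℝ)
    (q pr : Fin m → ℝ) (J : Fin (B+1) × Fin Kmax → ℝ)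
    (e : Fin (B+1)) (k : Fin Kmax) : ℝ :=
  mu + ∑ j, q j * WVal Es lam alpha J e k (pr j)

/-- The Bellman operator `T` of the decoupled single-source subproblem. -/
noncomputable def bellman {B Kmax : ℕ} (Es m : ℕ) (lam alpha mu : ℝ)
    (q pr : Fin m → ℝ) (J : Fin (B+1) × Fin Kmax → ℝ) :
    Fin (B+1) × Fin Kmax → ℝ :=
  fun s =>
    if Es ≤ s.1.val then
      min (uVal lam alpha J s.1 s.2) (vVal Es m lam alpha mu q pr J s.1 s.2)
    else uVal lam alpha J s.1 s.2


lemma succAge_mono {Kmax : ℕ} {k k' : Fin Kmax} (h : k ≤ k') : succAge k ≤ succAge k' := by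
  simp only [succAge, Fin.le_def] at *; omega

lemma ageVal_mono {Kmax : ℕ} {k k' : Fin Kmax} (h : k ≤ k') : ageVal k ≤ ageVal k' := by
  simp only [ageVal]
  have : (k.val : ℝ) ≤ k'.val := Nat.cast_le.mpr h
  linarith

lemma GVal_mono {B Kmax : ℕ} {lam : ℝ} (hlam0 : 0 ≤ lam) (hlam1 : lam ≤ 1)
    {J : Fin (B+1) × Fin Kmax → ℝ}
    (hmono : ∀ (e : Fin (B+1)) (k k' : Fin Kmax), k ≤ k' → J (e, k) ≤ J (e, k'))
    (e : Fin (B+1)) {k k' : Fin Kmax} (h : k ≤ k') :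
    GVal lam J e k ≤ GVal lam J e k' := by
  unfold GVal
  have h1 : (0:ℝ) ≤ 1 - lam := by linarith
  exact add_le_add (mul_le_mul_of_nonneg_left (hmono _ _ _ h) hlam0)
    (mul_le_mul_of_nonneg_left (hmono _ _ _ h) h1)

theorem bellman_preserves_age_monotone (B Es Kmax m : ℕ) (lam alpha mu : ℝ) (q pr : Fin m → ℝ)
    (hEs1 : 1 ≤ Es) (hEsB : Es ≤ B)
    (hlam0 : 0 ≤ lam) (hlam1 : lam ≤ 1)
    (halpha0 : 0 ≤ alpha) (halpha1 : alpha < 1)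
    (hmu : 0 ≤ mu) (hK : 1 ≤ Kmax) (hm : 1 ≤ m)
    (hq0 : ∀ j, 0 ≤ q j) (hq1 : ∑ j, q j = 1)
    (hpr : ∀ j, 0 ≤ pr j ∧ pr j ≤ 1)
    (J : Fin (B+1) × Fin Kmax → ℝ)
    (hmono : ∀ (e : Fin (B+1)) (k k' : Fin Kmax), k ≤ k' → J (e, k) ≤ J (e, k')) :
    ∀ (e : Fin (B+1)) (k k' : Fin Kmax), k ≤ k' → bellman Es m lam alpha mu q pr J (e, k) ≤ bellman Es m lam alpha mu q pr J (e, k') := by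

  intro e k k' h
  have hu : ∀ (e : Fin (B+1)), uVal lam alpha J e k ≤ uVal lam alpha J e k' := by
    intro e
    unfold uVal
    exact add_le_add (ageVal_mono h)
      (mul_le_mul_of_nonneg_left (GVal_mono hlam0 hlam1 hmono e (succAge_mono h)) halpha0)
  have hsig : ∀ j, sigVal Es lam alpha J e k (pr j) ≤ sigVal Es lam alpha J e k' (pr j) := by
    intro j
    obtain ⟨hp0, hp1⟩ := hpr j
    have hp1' : (0:ℝ) ≤ 1 - pr j := by linarith
    unfold sigVal
    have h1 : ageVal k * (1 - pr j) ≤ ageVal k' * (1 - pr j) :=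
      mul_le_mul_of_nonneg_right (ageVal_mono h) hp1'
    have h2 : alpha * pr j * GVal lam J (subE Es e) (ageOne k)
        = alpha * pr j * GVal lam J (subE Es e) (ageOne k') := by
      simp [ageOne]
    have h3 : alpha * (1 - pr j) * GVal lam J (subE Es e) (succAge k)
        ≤ alpha * (1 - pr j) * GVal lam J (subE Es e) (succAge k') :=
      mul_le_mul_of_nonneg_left (GVal_mono hlam0 hlam1 hmono _ (succAge_mono h))
        (mul_nonneg halpha0 hp1')
    linarith
  have hW : ∀ j, WVal Es lam alpha J e k (pr j) ≤ WVal Es lam alpha J e k' (pr j) :=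
    fun j => min_le_min (hu e) (hsig j)
  have hv : vVal Es m lam alpha mu q pr J e k ≤ vVal Es m lam alpha mu q pr J e k' := by
    unfold vVal
    refine add_le_add_right (Finset.sum_le_sum fun j _ => ?_) mu
    exact mul_le_mul_of_nonneg_left (hW j) (hq0 j)
  unfold bellman
  dsimp only
  split
  · exact min_le_min (hu e) hv
  · exact hu e
end

section
/- (Lemma 1, first part.) The optimal value function of the decoupled single-source subproblem is nondecreasing in the age: if J* is the unique fixed point of the Bellman operator T, then for every energy level E ∈ {0,…,B} and all ages K ≤ K' in {1,…,Kmax}, J*(E,K) ≤ J*(E,K'). -/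
open Finset Filter Topology

/-!
If `J(E,K) ≤ J(E,K') + D` for all `K ≤ K'` with some `D ≥ 0`, then the same holds for
`T J` with `α·D` in place of `D`: the stage costs are nondecreasing in the age, `K ↦ K⁺` is
monotone, the reset age `1` after a successful sample does not depend on `K`, and every value
is built from `G_J` by nonnegative combinations and minima. For the fixed point, take `D` to be the
largest age decrease `J*(E,K) - J*(E,K')`, `K ≤ K'`, over the finite state space; then
`D ≤ α·D` with `α < 1`, so `D ≤ 0`.
-/

def AgeMonoUpTo {σ ι : Type*} [LE ι] (J : σ × ι → ℝ) (D : ℝ) : Prop :=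
  ∀ e k k', k ≤ k' → J (e, k) ≤ J (e, k') + D

theorem ageMonoUpTo_zero_of_contracts {σ ι : Type*} [Fintype σ] [Fintype ι] [Preorder ι]
    {J : σ × ι → ℝ} {α : ℝ} (hα : α < 1)
    (hJ : ∀ D, 0 ≤ D → AgeMonoUpTo J D → AgeMonoUpTo J (α * D)) :
    AgeMonoUpTo J 0 := by
  classical
  intro e k k' hkk'
  let gap : σ × ι × ι → ℝ := fun t => J (t.1, t.2.1) - J (t.1, t.2.2)
  let pairs := univ.filter fun t : σ × ι × ι => t.2.1 ≤ t.2.2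
  obtain ⟨t, ht, hmax⟩ :=
    pairs.exists_max_image gap ⟨(e, k, k'), by simpa [pairs] using hkk'⟩
  have hmono : AgeMonoUpTo J (gap t) := fun e k k' h => by
    have := hmax (e, k, k') (by simpa [pairs] using h)
    simp only [gap] at this
    linarith
  have hgap0 : 0 ≤ gap t := by
    simpa [gap] using hmax (t.1, t.2.1, t.2.1) (by simp [pairs])
  have hcontr : gap t ≤ α * gap t := by
    have := hJ _ hgap0 hmono t.1 t.2.1 t.2.2 (by simpa [pairs] using ht)
    simp only [gap]
    linarith
  have hgap_nonpos : gap t ≤ 0 := by nlinarith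
  linarith [hmono e k k' hkk']

theorem succAge_mono_s5 {Kmax : ℕ} : Monotone (succAge (Kmax := Kmax)) := by
  intro k k' h
  simp only [Fin.le_def, succAge] at h ⊢
  omega

theorem ageVal_mono_s5 {Kmax : ℕ} : Monotone (ageVal (Kmax := Kmax)) := by
  intro k k' h
  simp only [ageVal, add_le_add_iff_right, Nat.cast_le]
  exact h

namespace AgeMonoUpTo

variable {B Kmax : ℕ} {lam alpha D : ℝ} {J : Fin (B+1) × Fin Kmax → ℝ}
  {e : Fin (B+1)} {k k' : Fin Kmax}

theorem GVal_le (hJ : AgeMonoUpTo J D) (hlam0 : 0 ≤ lam) (hlam1 : lam ≤ 1) (h : k ≤ k') :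
    GVal lam J e k ≤ GVal lam J e k' + D := by
  have hclamp := mul_le_mul_of_nonneg_left (hJ (clampAdd e) k k' h) hlam0
  have hstay := mul_le_mul_of_nonneg_left (hJ e k k' h) (sub_nonneg.2 hlam1)
  simp only [GVal]
  linarith

theorem uVal_le (hJ : AgeMonoUpTo J D) (hlam0 : 0 ≤ lam) (hlam1 : lam ≤ 1)
    (halpha0 : 0 ≤ alpha) (h : k ≤ k') :
    uVal lam alpha J e k ≤ uVal lam alpha J e k' + alpha * D := by
  have hG :=
    mul_le_mul_of_nonneg_left (hJ.GVal_le (e := e) hlam0 hlam1 (succAge_mono_s5 h)) halpha0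
  simp only [uVal]
  linarith [ageVal_mono_s5 h]

theorem sigVal_le (hJ : AgeMonoUpTo J D) (hD : 0 ≤ D) (hlam0 : 0 ≤ lam) (hlam1 : lam ≤ 1)
    (halpha0 : 0 ≤ alpha) {Es : ℕ} {p : ℝ} (hp0 : 0 ≤ p) (hp1 : p ≤ 1) (h : k ≤ k') :
    sigVal Es lam alpha J e k p ≤ sigVal Es lam alpha J e k' p + alpha * D := by
  have hage := mul_le_mul_of_nonneg_right (ageVal_mono_s5 h) (sub_nonneg.2 hp1)
  have hG := mul_le_mul_of_nonneg_left
    (hJ.GVal_le (e := subE Es e) hlam0 hlam1 (succAge_mono_s5 h))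
    (mul_nonneg halpha0 (sub_nonneg.2 hp1))
  have hslack : 0 ≤ alpha * p * D := by positivity
  have hreset : ageOne k = ageOne k' := rfl
  simp only [sigVal, hreset]
  linarith

theorem WVal_le (hJ : AgeMonoUpTo J D) (hD : 0 ≤ D) (hlam0 : 0 ≤ lam) (hlam1 : lam ≤ 1)
    (halpha0 : 0 ≤ alpha) {Es : ℕ} {p : ℝ} (hp0 : 0 ≤ p) (hp1 : p ≤ 1) (h : k ≤ k') :
    WVal Es lam alpha J e k p ≤ WVal Es lam alpha J e k' p + alpha * D := by
  rw [WVal, WVal, ← min_add_add_right]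
  exact min_le_min (hJ.uVal_le hlam0 hlam1 halpha0 h)
    (hJ.sigVal_le hD hlam0 hlam1 halpha0 hp0 hp1 h)

theorem vVal_le (hJ : AgeMonoUpTo J D) (hD : 0 ≤ D) (hlam0 : 0 ≤ lam) (hlam1 : lam ≤ 1)
    (halpha0 : 0 ≤ alpha) {Es m : ℕ} {mu : ℝ} {q pr : Fin m → ℝ}
    (hq0 : ∀ j, 0 ≤ q j) (hq1 : ∑ j, q j = 1) (hpr : ∀ j, 0 ≤ pr j ∧ pr j ≤ 1)
    (h : k ≤ k') :
    vVal Es m lam alpha mu q pr J e k ≤ vVal Es m lam alpha mu q pr J e k' + alpha * D := by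
  have hsum : ∑ j, q j * WVal Es lam alpha J e k (pr j) ≤
      ∑ j, q j * (WVal Es lam alpha J e k' (pr j) + alpha * D) :=
    sum_le_sum fun j _ => mul_le_mul_of_nonneg_left
      (hJ.WVal_le hD hlam0 hlam1 halpha0 (hpr j).1 (hpr j).2 h) (hq0 j)
  simp only [mul_add, sum_add_distrib, ← sum_mul, hq1, one_mul] at hsum
  simp only [vVal]
  linarith

theorem bellman (hJ : AgeMonoUpTo J D) (hD : 0 ≤ D) (hlam0 : 0 ≤ lam) (hlam1 : lam ≤ 1)
    (halpha0 : 0 ≤ alpha) {Es m : ℕ} {mu : ℝ} {q pr : Fin m → ℝ}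
    (hq0 : ∀ j, 0 ≤ q j) (hq1 : ∑ j, q j = 1) (hpr : ∀ j, 0 ≤ pr j ∧ pr j ≤ 1) :
    AgeMonoUpTo (bellman Es m lam alpha mu q pr J) (alpha * D) := by
  intro e k k' h
  simp only [_root_.bellman]
  split_ifs
  · rw [← min_add_add_right]
    exact min_le_min (hJ.uVal_le hlam0 hlam1 halpha0 h)
      (hJ.vVal_le hD hlam0 hlam1 halpha0 hq0 hq1 hpr h)
  · exact hJ.uVal_le hlam0 hlam1 halpha0 h

end AgeMonoUpTo

theorem optimal_value_age_monotone_general (B Es Kmax m : ℕ) (lam alpha mu : ℝ) (q pr : Fin m → ℝ)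
    (hlam0 : 0 ≤ lam) (hlam1 : lam ≤ 1)
    (halpha0 : 0 ≤ alpha) (halpha1 : alpha < 1)
    (hq0 : ∀ j, 0 ≤ q j) (hq1 : ∑ j, q j = 1)
    (hpr : ∀ j, 0 ≤ pr j ∧ pr j ≤ 1)
    (Jstar : Fin (B+1) × Fin Kmax → ℝ)
    (hfix : bellman Es m lam alpha mu q pr Jstar = Jstar) :
      ∀ (e : Fin (B+1)) (k k' : Fin Kmax), k ≤ k' → Jstar (e, k) ≤ Jstar (e, k') := by
  have hcontracts : ∀ D, 0 ≤ D → AgeMonoUpTo Jstar D → AgeMonoUpTo Jstar (alpha * D) :=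
    fun D hD hJ => hfix ▸ hJ.bellman hD hlam0 hlam1 halpha0 hq0 hq1 hpr
  intro e k k' h
  simpa using ageMonoUpTo_zero_of_contracts halpha1 hcontracts e k k' h

theorem optimal_value_age_monotone (B Es Kmax m : ℕ) (lam alpha mu : ℝ) (q pr : Fin m → ℝ)
    (hEs1 : 1 ≤ Es) (hEsB : Es ≤ B)
    (hlam0 : 0 ≤ lam) (hlam1 : lam ≤ 1)
    (halpha0 : 0 ≤ alpha) (halpha1 : alpha < 1)
    (hmu : 0 ≤ mu) (hK : 1 ≤ Kmax) (hm : 1 ≤ m)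
    (hq0 : ∀ j, 0 ≤ q j) (hq1 : ∑ j, q j = 1)
    (hpr : ∀ j, 0 ≤ pr j ∧ pr j ≤ 1)
    (Jstar : Fin (B+1) × Fin Kmax → ℝ)
    (hfix : bellman Es m lam alpha mu q pr Jstar = Jstar)
    (huniq : ∀ J' : Fin (B+1) × Fin Kmax → ℝ, bellman Es m lam alpha mu q pr J' = J' → J' = Jstar) :
    ∀ (e : Fin (B+1)) (k k' : Fin Kmax), k ≤ k' → Jstar (e, k) ≤ Jstar (e, k') :=
  optimal_value_age_monotone_general B Es Kmax m lam alpha mu q pr hlam0 hlam1 halpha0 halpha1 hq0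
    hq1 hpr Jstar hfix
end

section
/- (Theorem 1, threshold form.) The optimal sampling policy of the probed source is a threshold policy on the packet-success probability: let J* be the unique fixed point of the Bellman operator T of the decoupled single-source subproblem, fix a state (E,K) with E ≥ Es, and let σ(p) = K·(1−p) + α·p·G_{J*}(E−Es,1) + α·(1−p)·G_{J*}(E−Es,K⁺) denote the expected sampling cost. Then there exists a threshold p_th ∈ ℝ such that for every p ∈ [0,1], sampling is optimal at p (i.e., σ(p) ≤ u_{J*}(E,K)) if and only if p ≥ p_th. -/
open Finset Filter Topology

/-- Monotonicity in age index. -/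
def MonoJ {B Kmax : ℕ} (J : Fin (B+1) × Fin Kmax → ℝ) : Prop :=
  ∀ e (k k' : Fin Kmax), k.val ≤ k'.val → J (e, k) ≤ J (e, k')

section aux
variable {B Kmax : ℕ} (Es m : ℕ) (lam alpha mu : ℝ) (q pr : Fin m → ℝ)

lemma GVal_mono_s9 (hlam0 : 0 ≤ lam) (hlam1 : lam ≤ 1)
    {J : Fin (B+1) × Fin Kmax → ℝ} (hJ : MonoJ J) (e : Fin (B+1))
    {a b : Fin Kmax} (hab : a.val ≤ b.val) : GVal lam J e a ≤ GVal lam J e b := by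
  have h1 := hJ (clampAdd e) a b hab
  have h2 := hJ e a b hab
  unfold GVal
  nlinarith

lemma mono_bellman (hlam0 : 0 ≤ lam) (hlam1 : lam ≤ 1) (halpha0 : 0 ≤ alpha)
    (hq0 : ∀ j, 0 ≤ q j) (hpr : ∀ j, 0 ≤ pr j ∧ pr j ≤ 1)
    {J : Fin (B+1) × Fin Kmax → ℝ} (hJ : MonoJ J) :
    MonoJ (bellman Es m lam alpha mu q pr J) := by
  intro e k k' hk
  have hsucc : (succAge k).val ≤ (succAge k').val := by
    simp only [succAge]; omega
  have hage : ageVal k ≤ ageVal k' := by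
    unfold ageVal
    have : (k.val : ℝ) ≤ k'.val := by exact_mod_cast hk
    linarith
  have hu : uVal lam alpha J e k ≤ uVal lam alpha J e k' := by
    unfold uVal
    have := GVal_mono_s9 lam hlam0 hlam1 hJ e hsucc
    nlinarith
  have hv : vVal Es m lam alpha mu q pr J e k ≤ vVal Es m lam alpha mu q pr J e k' := by
    unfold vVal
    apply add_le_add (le_refl _)
    apply Finset.sum_le_sum
    intro j _
    apply mul_le_mul_of_nonneg_left _ (hq0 j)
    apply min_le_min hu
    unfold sigVal
    have hG1 : GVal lam J (subE Es e) (ageOne k) = GVal lam J (subE Es e) (ageOne k') := rfl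
    have hGK := GVal_mono_s9 lam hlam0 hlam1 hJ (subE Es e) hsucc
    have hp := hpr j
    rw [hG1]
    have t1 : 0 ≤ (ageVal k' - ageVal k) * (1 - pr j) :=
      mul_nonneg (by linarith) (by linarith [hp.2])
    have t2 : 0 ≤ alpha * (1 - pr j) *
        (GVal lam J (subE Es e) (succAge k') - GVal lam J (subE Es e) (succAge k)) :=
      mul_nonneg (mul_nonneg halpha0 (by linarith [hp.2])) (by linarith)
    nlinarith [t1, t2]
  unfold bellman
  dsimp only
  split
  · exact min_le_min hu hv
  · exact hu

lemma bellman_pointwise (hlam0 : 0 ≤ lam) (hlam1 : lam ≤ 1) (halpha0 : 0 ≤ alpha)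
    (hq0 : ∀ j, 0 ≤ q j) (hq1 : ∑ j, q j = 1) (hpr : ∀ j, 0 ≤ pr j ∧ pr j ≤ 1)
    (J J' : Fin (B+1) × Fin Kmax → ℝ) (s : Fin (B+1) × Fin Kmax) :
    dist (bellman Es m lam alpha mu q pr J s) (bellman Es m lam alpha mu q pr J' s)
      ≤ alpha * dist J J' := by
  set D := dist J J' with hD
  have hD0 : 0 ≤ D := dist_nonneg
  have hG : ∀ (e : Fin (B+1)) (a : Fin Kmax),
      |GVal lam J e a - GVal lam J' e a| ≤ D := by
    intro e a
    have hx : |J (clampAdd e, a) - J' (clampAdd e, a)| ≤ D := by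
      rw [← Real.dist_eq]; exact dist_le_pi_dist J J' (clampAdd e, a)
    have hy : |J (e, a) - J' (e, a)| ≤ D := by
      rw [← Real.dist_eq]; exact dist_le_pi_dist J J' (e, a)
    unfold GVal
    rw [abs_le] at hx hy ⊢
    constructor <;> nlinarith
  have hu : ∀ (e : Fin (B+1)) (a : Fin Kmax),
      |uVal lam alpha J e a - uVal lam alpha J' e a| ≤ alpha * D := by
    intro e a
    have := hG e (succAge a)
    unfold uVal
    rw [abs_le] at this ⊢
    constructor <;> nlinarith
  have hsig : ∀ (e : Fin (B+1)) (a : Fin Kmax) (p : ℝ), 0 ≤ p → p ≤ 1 →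
      |sigVal Es lam alpha J e a p - sigVal Es lam alpha J' e a p| ≤ alpha * D := by
    intro e a p hp0 hp1
    have h1 := hG (subE Es e) (ageOne a)
    have h2 := hG (subE Es e) (succAge a)
    unfold sigVal
    rw [abs_le] at h1 h2 ⊢
    have ha1 : 0 ≤ alpha * p := mul_nonneg halpha0 hp0
    have ha2 : 0 ≤ alpha * (1 - p) := mul_nonneg halpha0 (by linarith)
    constructor <;>
      nlinarith [mul_le_mul_of_nonneg_left h1.2 ha1, mul_le_mul_of_nonneg_left h1.1 ha1,
        mul_le_mul_of_nonneg_left h2.2 ha2, mul_le_mul_of_nonneg_left h2.1 ha2]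
  have hW : ∀ (e : Fin (B+1)) (a : Fin Kmax) (p : ℝ), 0 ≤ p → p ≤ 1 →
      |WVal Es lam alpha J e a p - WVal Es lam alpha J' e a p| ≤ alpha * D := by
    intro e a p hp0 hp1
    unfold WVal
    exact (abs_min_sub_min_le_max _ _ _ _).trans (max_le (hu e a) (hsig e a p hp0 hp1))
  have hv : ∀ (e : Fin (B+1)) (a : Fin Kmax),
      |vVal Es m lam alpha mu q pr J e a - vVal Es m lam alpha mu q pr J' e a|
        ≤ alpha * D := by
    intro e a
    have hrw : vVal Es m lam alpha mu q pr J e a - vVal Es m lam alpha mu q pr J' e a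
        = ∑ j, q j * (WVal Es lam alpha J e a (pr j) - WVal Es lam alpha J' e a (pr j)) := by
      unfold vVal
      simp only [mul_sub, Finset.sum_sub_distrib]
      ring
    rw [hrw]
    calc |∑ j, q j * (WVal Es lam alpha J e a (pr j) - WVal Es lam alpha J' e a (pr j))|
        ≤ ∑ j, |q j * (WVal Es lam alpha J e a (pr j) - WVal Es lam alpha J' e a (pr j))| :=
          Finset.abs_sum_le_sum_abs _ _
      _ ≤ ∑ j, q j * (alpha * D) := by
          apply Finset.sum_le_sum
          intro j _
          rw [abs_mul, abs_of_nonneg (hq0 j)]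
          exact mul_le_mul_of_nonneg_left (hW e a (pr j) (hpr j).1 (hpr j).2) (hq0 j)
      _ = alpha * D := by rw [← Finset.sum_mul, hq1, one_mul]
  rw [Real.dist_eq]
  unfold bellman
  split
  · exact (abs_min_sub_min_le_max _ _ _ _).trans (max_le (hu s.1 s.2) (hv s.1 s.2))
  · exact hu s.1 s.2

lemma exists_mono_fixed (hlam0 : 0 ≤ lam) (hlam1 : lam ≤ 1)
    (halpha0 : 0 ≤ alpha) (halpha1 : alpha < 1)
    (hq0 : ∀ j, 0 ≤ q j) (hq1 : ∑ j, q j = 1) (hpr : ∀ j, 0 ≤ pr j ∧ pr j ≤ 1) :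
    ∃ J : Fin (B+1) × Fin Kmax → ℝ,
      bellman Es m lam alpha mu q pr J = J ∧ MonoJ J := by
  set T := bellman (B := B) (Kmax := Kmax) Es m lam alpha mu q pr with hT
  have hlip : LipschitzWith ⟨alpha, halpha0⟩ T := by
    apply LipschitzWith.of_dist_le_mul
    intro J J'
    have h0 : (0:ℝ) ≤ alpha * dist J J' := mul_nonneg halpha0 dist_nonneg
    exact (dist_pi_le_iff h0).mpr
      (bellman_pointwise Es m lam alpha mu q pr hlam0 hlam1 halpha0 hq0 hq1 hpr J J')
  have hcw : ContractingWith ⟨alpha, halpha0⟩ T := ⟨by exact_mod_cast halpha1, hlip⟩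
  refine ⟨ContractingWith.fixedPoint T hcw, hcw.fixedPoint_isFixedPt, ?_⟩
  intro e k k' hk
  have hiter : ∀ n : ℕ, MonoJ (T^[n] (fun _ => 0)) := by
    intro n
    induction n with
    | zero => intro _ _ _ _; simp
    | succ n ih =>
        rw [Function.iterate_succ_apply']
        exact mono_bellman Es m lam alpha mu q pr hlam0 hlam1 halpha0 hq0 hpr ih
  have hconv := hcw.tendsto_iterate_fixedPoint (fun _ => 0)
  have h1 : Tendsto (fun n => T^[n] (fun _ => 0) (e, k)) atTop
      (𝓝 (ContractingWith.fixedPoint T hcw (e, k))) :=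
    (tendsto_pi_nhds.mp hconv) (e, k)
  have h2 : Tendsto (fun n => T^[n] (fun _ => 0) (e, k')) atTop
      (𝓝 (ContractingWith.fixedPoint T hcw (e, k'))) :=
    (tendsto_pi_nhds.mp hconv) (e, k')
  exact le_of_tendsto_of_tendsto' h1 h2 (fun n => hiter n e k k' hk)

end aux

theorem sampling_threshold_policy (B Es Kmax m : ℕ) (lam alpha mu : ℝ) (q pr : Fin m → ℝ)
    (hEs1 : 1 ≤ Es) (hEsB : Es ≤ B)
    (hlam0 : 0 ≤ lam) (hlam1 : lam ≤ 1)
    (halpha0 : 0 ≤ alpha) (halpha1 : alpha < 1)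
    (hmu : 0 ≤ mu) (hK : 1 ≤ Kmax) (hm : 1 ≤ m)
    (hq0 : ∀ j, 0 ≤ q j) (hq1 : ∑ j, q j = 1)
    (hpr : ∀ j, 0 ≤ pr j ∧ pr j ≤ 1)
    (Jstar : Fin (B+1) × Fin Kmax → ℝ)
    (hfix : bellman Es m lam alpha mu q pr Jstar = Jstar)
    (huniq : ∀ J' : Fin (B+1) × Fin Kmax → ℝ, bellman Es m lam alpha mu q pr J' = J' → J' = Jstar)
    (e : Fin (B+1)) (k : Fin Kmax) (hE : Es ≤ e.val) :
    ∃ pth : ℝ, ∀ p : ℝ, 0 ≤ p → p ≤ 1 →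
      (sigVal Es lam alpha Jstar e k p ≤ uVal lam alpha Jstar e k ↔ pth ≤ p) := by
  obtain ⟨J, hfp, hmono⟩ := exists_mono_fixed Es m lam alpha mu q pr hlam0 hlam1
    halpha0 halpha1 hq0 hq1 hpr
  have hJeq : J = Jstar := huniq J hfp
  subst hJeq
  set G1 := GVal lam J (subE Es e) (ageOne k) with hG1
  set GK := GVal lam J (subE Es e) (succAge k) with hGK
  set u := uVal lam alpha J e k with hu
  set a := ageVal k + alpha * GK with ha
  set c := alpha * G1 - alpha * GK - ageVal k with hc
  have hGle : G1 ≤ GK := by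
    apply GVal_mono_s9 lam hlam0 hlam1 hmono
    simp [ageOne]
  have hage1 : (1:ℝ) ≤ ageVal k := by
    unfold ageVal
    have : (0:ℝ) ≤ (k.val : ℝ) := Nat.cast_nonneg _
    linarith
  have hcneg : c < 0 := by
    have : alpha * G1 ≤ alpha * GK := mul_le_mul_of_nonneg_left hGle halpha0
    rw [hc]; linarith
  refine ⟨(u - a) / c, ?_⟩
  intro p _ _
  have hsform : sigVal Es lam alpha J e k p = a + c * p := by
    unfold sigVal
    rw [ha, hc, ← hG1, ← hGK]
    ring
  rw [hsform, div_le_iff_of_neg hcneg]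
  constructor
  · intro h; nlinarith
  · intro h; nlinarith
end
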